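/- If a set of edges on a linear order v_1,…,v_n avoids the rique pattern and contains an edge (v_i,v_j) with i < j, and no edge of the set has an endpoint among v_1,…,v_{i−1}, then adding all edges (v_i, v_m) for i < m < j preserves avoidance of the rique pattern. -/
import Mathlib


/-- The order `f` avoids the rique forbidden pattern P.1. -/
def RiqueFree {V : Type*} (G : SimpleGraph V) (f : V → ℕ) : Prop :=
  ∀ a a' b b' c c', G.Adj a a' → G.Adj b b' → G.Adj c c' →
    ¬ (f a < f b ∧ f b < f c ∧ f c < f b' ∧ f b' < f a' ∧ f b' < f c')

/-- If a set of edges on the linear order `v_1, …, v_n` avoids the rique pattern,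
contains an edge `(v_i, v_j)` with `i < j`, and no edge of the set has an endpoint
among `v_1, …, v_{i−1}`, then adding all edges `(v_i, v_m)` with `i < m < j`
preserves avoidance of the rique pattern. -/
theorem add_tail_edges_riqueFree (n : ℕ) (G : SimpleGraph (Fin n))
    (i j : Fin n) (hij : i < j) (hadj : G.Adj i j)
    (hfree : RiqueFree G (fun v => v.val))
    (hlow : ∀ u v : Fin n, G.Adj u v → i ≤ u ∧ i ≤ v) :
    RiqueFree (G ⊔ SimpleGraph.fromRel (fun u v => u = i ∧ i < v ∧ v < j))
      (fun v => v.val) := by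
  intro a a' b b' c c' haa hbb hcc hpat
  obtain ⟨h1, h2, h3, h4, h5⟩ := hpat
  simp only [SimpleGraph.sup_adj, SimpleGraph.fromRel_adj] at haa hbb hcc
  have key : ∀ u v : Fin n,
      (G.Adj u v ∨ (u ≠ v ∧ ((u = i ∧ i < v ∧ v < j) ∨ (v = i ∧ i < u ∧ u < j)))) →
      i ≤ u ∧ i ≤ v := by
    rintro u v (h | ⟨_, ⟨rfl, hl, hr⟩ | ⟨rfl, hl, hr⟩⟩)
    · exact hlow u v h
    · exact ⟨le_refl _, hl.le⟩
    · exact ⟨hl.le, le_refl _⟩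
  have hia : i ≤ a := (key a a' haa).1
  have hib : (i : ℕ) < b.val := lt_of_le_of_lt hia h1
  have h1' : (a : ℕ) < b := h1
  have h2' : (b : ℕ) < c := h2
  have h3' : (c : ℕ) < b' := h3
  have h4' : (b' : ℕ) < a' := h4
  have h5' : (b' : ℕ) < c' := h5
  have hbbG : G.Adj b b' := by
    rcases hbb with h | ⟨_, ⟨he, _, _⟩ | ⟨he, _, _⟩⟩
    · exact h
    · have := congrArg Fin.val he; omega
    · have := congrArg Fin.val he; omega
  have hccG : G.Adj c c' := by
    rcases hcc with h | ⟨_, ⟨he, _, _⟩ | ⟨he, _, _⟩⟩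
    · exact h
    · have := congrArg Fin.val he; omega
    · have := congrArg Fin.val he; omega
  rcases haa with h | ⟨_, ⟨he, hl, hr⟩ | ⟨he, hl, hr⟩⟩
  · exact hfree a a' b b' c c' h hbbG hccG ⟨h1, h2, h3, h4, h5⟩
  · subst he
    exact hfree a j b b' c c' hadj hbbG hccG ⟨h1, h2, h3, lt_trans h4 hr, h5⟩
  · have hia' : (i : ℕ) ≤ a := hia
    have := congrArg Fin.val he; omega
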